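/- arXiv:2412.11478 — 10 statements merged into one kernel-verified Lean document; each statement's English description precedes it below -/
import Mathlib

section
/- Let U be an ultrafilter over a set I and V an ultrafilter over a set J. Then the following are equivalent: (1) there exist functions f : U → V and g : V → U such that for all X ∈ U and Y ∈ V, X ⊇ g(Y) ⟺ f(X) ⊇ Y (i.e., there is a Chu transform from ⟨U,⊇,U⟩ to ⟨V,⊇,V⟩); (2) U ≤_RK V, i.e., there exists a function h : J → I such that for every X ⊆ I, X ∈ U ⟺ h⁻¹[X] ∈ V. -/
/-- Chu transforms between ultrafilters (coded as Chu spaces `⟨U,⊇,U⟩`) correspond exactly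
to the Rudin–Keisler ordering: there is a Chu transform from `⟨U,⊇,U⟩` to `⟨V,⊇,V⟩`
iff `U ≤_RK V`, i.e. there is `h : J → I` with `X ∈ U ↔ h⁻¹[X] ∈ V` for every `X ⊆ I`. -/
theorem chu_transform_ultrafilter_iff_rudinKeisler {I J : Type*}
    (U : Ultrafilter I) (V : Ultrafilter J) :
    (∃ (f : {X : Set I // X ∈ U} → {Y : Set J // Y ∈ V})
        (g : {Y : Set J // Y ∈ V} → {X : Set I // X ∈ U}),
        ∀ (X : {X : Set I // X ∈ U}) (Y : {Y : Set J // Y ∈ V}),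
          (g Y : Set I) ⊆ (X : Set I) ↔ (Y : Set J) ⊆ (f X : Set J)) ↔
      ∃ h : J → I, ∀ X : Set I, X ∈ U ↔ h ⁻¹' X ∈ V := by
  constructor
  · rintro ⟨f, g, hfg⟩
    have hI : Nonempty I := by
      obtain ⟨i, -⟩ := Filter.nonempty_of_mem (Filter.univ_mem (f := (U : Filter I)))
      exact ⟨i⟩
    -- f is monotone
    have hmono : ∀ (X X' : {X : Set I // X ∈ U}), (X : Set I) ⊆ X' →
        (f X : Set J) ⊆ (f X' : Set J) := by
      intro X X' hXX'
      have h1 : (g (f X) : Set I) ⊆ (X : Set I) := (hfg X (f X)).mpr subset_rfl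
      exact (hfg X' (f X)).mp (h1.trans hXX')
    -- A j : intersection of all X ∈ U with j ∈ f X
    set A : J → Set I := fun j => {i | ∀ X : {X : Set I // X ∈ U}, j ∈ (f X : Set J) → i ∈ (X : Set I)} with hA
    -- the bad set is not in V
    have hbad : {j | ¬ (A j).Nonempty} ∉ V := by
      intro hB
      set Bs : {Y : Set J // Y ∈ V} := ⟨{j | ¬ (A j).Nonempty}, hB⟩ with hBs
      obtain ⟨i₀, hi₀⟩ := Filter.nonempty_of_mem (g Bs).2
      have hex : ∀ j, ¬ (A j).Nonempty → ∃ X : {X : Set I // X ∈ U},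
          j ∈ (f X : Set J) ∧ i₀ ∉ (X : Set I) := by
        intro j hj
        by_contra hc
        push_neg at hc
        exact hj ⟨i₀, fun X hX => hc X hX⟩
      choose Xf hXf1 hXf2 using hex
      obtain ⟨j₀, hj₀⟩ := Filter.nonempty_of_mem hB
      set Xbig : Set I := ⋃ (j : J) (hj : ¬ (A j).Nonempty), (Xf j hj : Set I) with hXbig
      have hXbigU : Xbig ∈ U := by
        refine Filter.mem_of_superset (Xf j₀ hj₀).2 ?_
        intro i hi
        exact Set.mem_iUnion.mpr ⟨j₀, Set.mem_iUnion.mpr ⟨hj₀, hi⟩⟩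
      have hBsub : (Bs : Set J) ⊆ (f ⟨Xbig, hXbigU⟩ : Set J) := by
        intro j hj
        refine hmono (Xf j hj) ⟨Xbig, hXbigU⟩ ?_ (hXf1 j hj)
        intro i hi
        exact Set.mem_iUnion.mpr ⟨j, Set.mem_iUnion.mpr ⟨hj, hi⟩⟩
      have := (hfg ⟨Xbig, hXbigU⟩ Bs).mpr hBsub hi₀
      rw [Set.mem_iUnion₂] at this
      obtain ⟨j, hj, hij⟩ := this
      exact hXf2 j hj hij
    have hgood : {j | (A j).Nonempty} ∈ V := by
      have := (Ultrafilter.compl_mem_iff_notMem (f := V)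
        (s := {j | ¬ (A j).Nonempty})).mpr hbad
      convert this using 1
      ext j
      simp
    -- define h
    classical
    refine ⟨fun j => if hj : (A j).Nonempty then hj.choose else Classical.arbitrary I, ?_⟩
    have hfor : ∀ X : Set I, X ∈ U → (fun j => if hj : (A j).Nonempty then hj.choose
        else Classical.arbitrary I) ⁻¹' X ∈ V := by
      intro X hX
      refine Filter.mem_of_superset (Filter.inter_mem (f ⟨X, hX⟩).2 hgood) ?_
      rintro j ⟨hj1, hj2⟩
      simp only [Set.mem_preimage]
      simp only [Set.mem_setOf_eq] at hj2
      rw [dif_pos hj2]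
      exact hj2.choose_spec ⟨X, hX⟩ hj1
    intro X
    constructor
    · exact hfor X
    · intro hXV
      by_contra hXU
      have hXc : Xᶜ ∈ U := (Ultrafilter.compl_mem_iff_notMem (f := U) (s := X)).mpr hXU
      have := hfor Xᶜ hXc
      rw [Set.preimage_compl] at this
      exact (Ultrafilter.compl_mem_iff_notMem (f := V)).mp this hXV
  · rintro ⟨h, hh⟩
    refine ⟨fun X => ⟨h ⁻¹' X.1, (hh X.1).mp X.2⟩, fun Y => ⟨h '' Y.1, ?_⟩, ?_⟩
    · refine (hh (h '' Y.1)).mpr (Filter.mem_of_superset Y.2 ?_)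
      exact Set.subset_preimage_image h Y.1
    · intro X Y
      exact (Set.image_subset_iff (s := Y.1) (t := X.1) (f := h))
end

section
/- Let U be an ultrafilter over a set I and V an ultrafilter over a set J, and let h : J → I be a function such that for every X ⊆ I, X ∈ U ⟺ h⁻¹[X] ∈ V. Then the functions f : U → V defined by f(X) = h⁻¹[X] and g : V → U defined by g(Y) = h[Y] form a Chu transform from ⟨U,⊇,U⟩ to ⟨V,⊇,V⟩; that is, h⁻¹[X] ∈ V and h[Y] ∈ U for all X ∈ U, Y ∈ V, and for all X ∈ U and Y ∈ V, X ⊇ h[Y] ⟺ h⁻¹[X] ⊇ Y. -/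
/-- If `h : J → I` witnesses `U ≤_RK V` (i.e. `X ∈ U ↔ h⁻¹[X] ∈ V` for all `X ⊆ I`), then
`X ↦ h⁻¹[X]` and `Y ↦ h[Y]` form a Chu transform from `⟨U,⊇,U⟩` to `⟨V,⊇,V⟩`: preimages of
members of `U` lie in `V`, images of members of `V` lie in `U`, and for all `X ∈ U`, `Y ∈ V`
we have `h[Y] ⊆ X ↔ Y ⊆ h⁻¹[X]`. -/
theorem rudinKeisler_gives_chu_transform {I J : Type*}
    (U : Ultrafilter I) (V : Ultrafilter J) (h : J → I)
    (hh : ∀ X : Set I, X ∈ U ↔ h ⁻¹' X ∈ V) :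
    (∀ X ∈ U, h ⁻¹' X ∈ V) ∧ (∀ Y ∈ V, h '' Y ∈ U) ∧
      ∀ X ∈ U, ∀ Y ∈ V, h '' Y ⊆ X ↔ Y ⊆ h ⁻¹' X := by
  refine ⟨fun X hX => (hh X).mp hX, fun Y hY => ?_, fun X _ Y _ => Set.image_subset_iff⟩
  rw [hh]
  exact V.mem_of_superset hY (Set.subset_preimage_image h Y)
end

section
/- Let U be a non-principal ultrafilter over an infinite set I, V an ultrafilter over a set J, and (f,g) a Chu transform from ⟨U,⊇,U⟩ to ⟨V,⊇,V⟩ (i.e., f : U → V, g : V → U, and for all X ∈ U, Y ∈ V: X ⊇ g(Y) ⟺ f(X) ⊇ Y). Then the set J \ ⋂_{i∈I} f(I \ {i}) belongs to V. -/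
/-- Claim 4.4 (Claim `cl:uno`): let `U` be a non-principal ultrafilter over an infinite set `I`
(so that `I \ {i} ∈ U` for every `i`), `V` an ultrafilter over `J`, and `(f, g)` a Chu
transform from `⟨U,⊇,U⟩` to `⟨V,⊇,V⟩`. Then `J \ ⋂_{i ∈ I} f(I \ {i})` belongs to `V`. -/
theorem chu_transform_ultrafilter_claim {I J : Type*} [Infinite I]
    (U : Ultrafilter I) (V : Ultrafilter J)
    (hU : ∀ i : I, ({i}ᶜ : Set I) ∈ U)
    (f : {X : Set I // X ∈ U} → {Y : Set J // Y ∈ V})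
    (g : {Y : Set J // Y ∈ V} → {X : Set I // X ∈ U})
    (adj : ∀ (X : {X : Set I // X ∈ U}) (Y : {Y : Set J // Y ∈ V}),
      (g Y : Set I) ⊆ (X : Set I) ↔ (Y : Set J) ⊆ (f X : Set J)) :
    (⋂ i : I, (f ⟨{i}ᶜ, hU i⟩ : Set J))ᶜ ∈ V := by
  by_contra h
  have hN : (⋂ i : I, (f ⟨{i}ᶜ, hU i⟩ : Set J)) ∈ V := by
    rcases (Ultrafilter.mem_or_compl_mem V _) with h' | h'
    · exact h'
    · exact absurd h' h
  set Y : {Y : Set J // Y ∈ V} := ⟨_, hN⟩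
  have hsub : ∀ i : I, (g Y : Set I) ⊆ ({i}ᶜ : Set I) := by
    intro i
    exact (adj ⟨{i}ᶜ, hU i⟩ Y).mpr (Set.iInter_subset _ i)
  have hempty : (g Y : Set I) = ∅ := by
    ext x
    simp only [Set.mem_empty_iff_false, iff_false]
    intro hx
    exact hsub x hx rfl
  have := (g Y).2
  rw [hempty] at this
  exact Ultrafilter.empty_notMem this
end

section
/- Let U and V be non-principal ultrafilters over ω. If the partially ordered sets ⟨U,⊇⟩ and ⟨V,⊇⟩ are order-isomorphic, then there exists a bijective function π : ω → ω such that V = {π[X] : X ∈ U}; equivalently, for every Y ⊆ ω, Y ∈ V ⟺ π⁻¹[Y] ∈ U. -/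
/-- In a non-principal ultrafilter, the coatoms of the inclusion order are exactly the
complements of singletons. -/
lemma coatom_iff_compl_singleton (W : Ultrafilter ℕ)
    (_hW : ∀ A : Set ℕ, A.Finite → A ∉ W) (X : Set ℕ) (hX : X ∈ W) :
    (X ≠ Set.univ ∧ ∀ Z ∈ W, X ⊆ Z → Z = X ∨ Z = Set.univ) ↔ ∃ n : ℕ, X = {n}ᶜ := by
  constructor
  · rintro ⟨hne, hco⟩
    obtain ⟨n, hn⟩ : ∃ n, n ∉ X := by
      by_contra h
      push_neg at h
      exact hne (Set.eq_univ_of_forall h)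
    refine ⟨n, ?_⟩
    have hcompl : Xᶜ = {n} := by
      apply Set.eq_singleton_iff_unique_mem.mpr
      refine ⟨hn, fun m hm => ?_⟩
      by_contra hmn
      have hZ : X ∪ {n} ∈ W := (W.toFilter.sets_of_superset hX Set.subset_union_left)
      have := hco (X ∪ {n}) hZ Set.subset_union_left
      rcases this with h1 | h1
      · have : n ∈ X := by
          have : n ∈ X ∪ {n} := Or.inr rfl
          rwa [h1] at this
        exact hn this
      · have : m ∈ X ∪ {n} := h1 ▸ Set.mem_univ m
        rcases this with h2 | h2
        · exact hm h2
        · exact hmn h2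
    rw [← compl_compl X, hcompl]
  · rintro ⟨n, rfl⟩
    refine ⟨?_, fun Z hZ hsub => ?_⟩
    · intro h
      have : n ∈ ({n}ᶜ : Set ℕ) := h ▸ Set.mem_univ n
      exact this rfl
    · by_cases hn : n ∈ Z
      · right
        apply Set.eq_univ_of_forall
        intro m
        by_cases hm : m = n
        · exact hm ▸ hn
        · exact hsub hm
      · left
        apply le_antisymm
        · intro m hm hmn
          exact hn (hmn ▸ hm)
        · exact hsub

/-- Rudin's theorem (via Kenyon): if `U` and `V` are non-principal ultrafilters over `ω` and
the partially ordered sets `⟨U,⊇⟩` and `⟨V,⊇⟩` are order-isomorphic, then there is a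
bijection `π : ω → ω` with `V = {π[X] : X ∈ U}`; equivalently `Y ∈ V ↔ π⁻¹[Y] ∈ U` for
every `Y ⊆ ω`. -/
theorem ultrafilter_orderIso_of_nonprincipal (U V : Ultrafilter ℕ)
    (hU : ∀ A : Set ℕ, A.Finite → A ∉ U) (hV : ∀ A : Set ℕ, A.Finite → A ∉ V)
    (e : {X : Set ℕ // X ∈ U} ≃ {Y : Set ℕ // Y ∈ V})
    (he : ∀ X X' : {X : Set ℕ // X ∈ U},
      (X' : Set ℕ) ⊆ (X : Set ℕ) ↔ (e X' : Set ℕ) ⊆ (e X : Set ℕ)) :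
    ∃ π : ℕ → ℕ, Function.Bijective π ∧
      (∀ S : Set ℕ, S ∈ V ↔ ∃ X ∈ U, S = π '' X) ∧
      ∀ Y : Set ℕ, Y ∈ V ↔ π ⁻¹' Y ∈ U := by
  classical
  have hUco : ∀ n : ℕ, ({n}ᶜ : Set ℕ) ∈ U := fun n =>
    Ultrafilter.compl_mem_iff_notMem.mpr (hU {n} (Set.finite_singleton n))
  have hUuniv : (Set.univ : Set ℕ) ∈ U := Filter.univ_mem
  have hVuniv : (Set.univ : Set ℕ) ∈ V := Filter.univ_mem
  -- e preserves the top element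
  have htop : e ⟨Set.univ, hUuniv⟩ = ⟨Set.univ, hVuniv⟩ := by
    apply Subtype.ext
    apply Set.eq_univ_of_univ_subset
    have h1 : (e (e.symm ⟨Set.univ, hVuniv⟩) : Set ℕ) ⊆ (e ⟨Set.univ, hUuniv⟩ : Set ℕ) :=
      (he ⟨Set.univ, hUuniv⟩ (e.symm ⟨Set.univ, hVuniv⟩)).mp (Set.subset_univ _)
    rwa [e.apply_symm_apply] at h1
  -- image of a coatom is a coatom
  have hcoatom : ∀ n : ℕ, ∃ m : ℕ, (e ⟨{n}ᶜ, hUco n⟩ : Set ℕ) = {m}ᶜ := by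
    intro n
    apply (coatom_iff_compl_singleton V hV _ (e ⟨{n}ᶜ, hUco n⟩).2).mp
    constructor
    · intro h
      have : e ⟨{n}ᶜ, hUco n⟩ = e ⟨Set.univ, hUuniv⟩ := by
        rw [htop]; exact Subtype.ext h
      have h2 : ({n}ᶜ : Set ℕ) = Set.univ := congrArg Subtype.val (e.injective this)
      have : n ∈ ({n}ᶜ : Set ℕ) := h2 ▸ Set.mem_univ n
      exact this rfl
    · intro Z hZ hsub
      set X' := e.symm ⟨Z, hZ⟩ with hX'
      have heX' : e X' = ⟨Z, hZ⟩ := e.apply_symm_apply _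
      have hsub' : ({n}ᶜ : Set ℕ) ⊆ (X' : Set ℕ) := by
        apply (he X' ⟨{n}ᶜ, hUco n⟩).mpr
        rw [heX']
        exact hsub
      have := (coatom_iff_compl_singleton U hU _ (hUco n)).mpr ⟨n, rfl⟩
      rcases this.2 (X' : Set ℕ) X'.2 hsub' with h1 | h1
      · left
        have hx : X' = ⟨{n}ᶜ, hUco n⟩ := Subtype.ext h1
        rw [← hx, heX']
      · right
        have : X' = ⟨Set.univ, hUuniv⟩ := Subtype.ext h1
        have h2 := congrArg Subtype.val heX'
        rw [this, htop] at h2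
        exact h2.symm
  choose π hπ using hcoatom
  -- key pointwise fact
  have hmem : ∀ (X : {X : Set ℕ // X ∈ U}) (n : ℕ), n ∈ (X : Set ℕ) ↔ π n ∈ (e X : Set ℕ) := by
    intro X n
    rw [← not_iff_not, ← Set.subset_compl_singleton_iff, ← Set.subset_compl_singleton_iff,
      ← hπ n]
    exact he ⟨{n}ᶜ, hUco n⟩ X
  have hπinj : Function.Injective π := by
    intro a b hab
    have : (e ⟨{a}ᶜ, hUco a⟩ : Set ℕ) = (e ⟨{b}ᶜ, hUco b⟩ : Set ℕ) := by
      rw [hπ a, hπ b, hab]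
    have h2 : ({a}ᶜ : Set ℕ) = {b}ᶜ := congrArg Subtype.val (e.injective (Subtype.ext this))
    have : a ∈ ({b}ᶜ : Set ℕ)ᶜ := by rw [← h2]; simp
    simpa using this
  have hπsurj : Function.Surjective π := by
    intro m
    -- {m}ᶜ ∈ V is a coatom of V, hence its preimage under e is a coatom of U
    set X := e.symm ⟨{m}ᶜ, Ultrafilter.compl_mem_iff_notMem.mpr
      (hV {m} (Set.finite_singleton m))⟩ with hX
    have heX : (e X : Set ℕ) = {m}ᶜ := by rw [hX, e.apply_symm_apply]
    have hco : (X : Set ℕ) ≠ Set.univ ∧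
        ∀ Z ∈ U, (X : Set ℕ) ⊆ Z → Z = (X : Set ℕ) ∨ Z = Set.univ := by
      constructor
      · intro h
        have : X = ⟨Set.univ, hUuniv⟩ := Subtype.ext h
        have h2 := congrArg Subtype.val (congrArg e this)
        simp only [htop] at h2
        rw [heX] at h2
        have : m ∈ ({m}ᶜ : Set ℕ) := h2 ▸ Set.mem_univ m
        exact this rfl
      · intro Z hZ hsub
        have hsub' : (e X : Set ℕ) ⊆ (e ⟨Z, hZ⟩ : Set ℕ) := (he ⟨Z, hZ⟩ X).mp hsub
        rw [heX] at hsub'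
        have hVm := (coatom_iff_compl_singleton V hV ({m}ᶜ)
          (Ultrafilter.compl_mem_iff_notMem.mpr (hV {m} (Set.finite_singleton m)))).mpr ⟨m, rfl⟩
        rcases hVm.2 _ (e ⟨Z, hZ⟩).2 hsub' with h1 | h1
        · left
          have : e ⟨Z, hZ⟩ = e X := by
            apply Subtype.ext; rw [h1, heX]
          exact congrArg Subtype.val (e.injective this)
        · right
          have : e ⟨Z, hZ⟩ = e ⟨Set.univ, hUuniv⟩ := by
            rw [htop]; exact Subtype.ext h1
          exact congrArg Subtype.val (e.injective this)
    obtain ⟨n, hn⟩ := (coatom_iff_compl_singleton U hU _ X.2).mp hco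
    refine ⟨n, ?_⟩
    have : e ⟨{n}ᶜ, hUco n⟩ = e X := by
      congr 1
      exact Subtype.ext hn.symm
    have h2 := congrArg Subtype.val this
    rw [hπ n, heX] at h2
    have : π n ∈ ({π n}ᶜ : Set ℕ)ᶜ := by simp
    rw [h2] at this
    simpa using this
  -- e is given by the image under π
  have himg : ∀ X : {X : Set ℕ // X ∈ U}, (e X : Set ℕ) = π '' (X : Set ℕ) := by
    intro X
    ext m
    obtain ⟨n, rfl⟩ := hπsurj m
    rw [← hmem X n]
    constructor
    · exact fun h => ⟨n, h, rfl⟩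
    · rintro ⟨k, hk, hkn⟩
      rwa [← hπinj hkn]
  refine ⟨π, ⟨hπinj, hπsurj⟩, ?_, ?_⟩
  · intro S
    constructor
    · intro hS
      refine ⟨(e.symm ⟨S, hS⟩ : Set ℕ), (e.symm ⟨S, hS⟩).2, ?_⟩
      rw [← himg (e.symm ⟨S, hS⟩), e.apply_symm_apply]
    · rintro ⟨X, hX, rfl⟩
      have := (e ⟨X, hX⟩).2
      rwa [himg ⟨X, hX⟩] at this
  · intro Y
    constructor
    · intro hY
      have : Y = π '' (e.symm ⟨Y, hY⟩ : Set ℕ) := by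
        rw [← himg (e.symm ⟨Y, hY⟩), e.apply_symm_apply]
      rw [this, Set.preimage_image_eq _ hπinj]
      exact (e.symm ⟨Y, hY⟩).2
    · intro hY
      have := (e ⟨π ⁻¹' Y, hY⟩).2
      rw [himg ⟨π ⁻¹' Y, hY⟩, Set.image_preimage_eq Y hπsurj] at this
      exact this
end

section
/- Let ⟨V,E⟩ and ⟨V',E'⟩ be graphs (E a set of 2-element subsets of V, E' a set of 2-element subsets of V'), and let f : V → V' and g : E'∪{∅} → E∪{∅} be functions. Then the following are equivalent: (1) (f,g) is a Chu transform from ⟨V,∈,E∪{∅}⟩ to ⟨V',∈,E'∪{∅}⟩, i.e., for every v ∈ V and e' ∈ E'∪{∅}, v ∈ g(e') ⟺ f(v) ∈ e'; (2) f is strictly continuous and for every e' ∈ E'∪{∅}, f⁻¹[e'] = g(e'). -/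
/-- Chu transforms between graphs `⟨V,E⟩` and `⟨V',E'⟩` (coded as Chu spaces
`⟨V,∈,E∪{∅}⟩` and `⟨V',∈,E'∪{∅}⟩`) correspond to strictly continuous functions:
`(f, g)` is a Chu transform iff `f` is strictly continuous (the preimage of every edge
is empty or an edge) and `g(e') = f⁻¹[e']` for every state `e'`. -/
theorem chu_transform_graph_iff {V V' : Type*} (E : Set (Set V)) (E' : Set (Set V'))
    (hE : ∀ e ∈ E, e.ncard = 2) (hE' : ∀ e ∈ E', e.ncard = 2)
    (f : V → V')
    (g : {e' : Set V' // e' ∈ insert ∅ E'} → {e : Set V // e ∈ insert ∅ E}) :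
    (∀ (v : V) (e' : {e' : Set V' // e' ∈ insert ∅ E'}),
        v ∈ (g e' : Set V) ↔ f v ∈ (e' : Set V')) ↔
      ((∀ e' ∈ E', f ⁻¹' e' = ∅ ∨ f ⁻¹' e' ∈ E) ∧
        ∀ e' : {e' : Set V' // e' ∈ insert ∅ E'}, f ⁻¹' (e' : Set V') = (g e' : Set V)) := by
  constructor
  · intro h
    have key : ∀ e' : {e' : Set V' // e' ∈ insert ∅ E'},
        f ⁻¹' (e' : Set V') = (g e' : Set V) := by
      intro e'
      ext v
      simp [Set.mem_preimage, h v e']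
    refine ⟨?_, key⟩
    intro e' he'
    have := (g ⟨e', Set.mem_insert_of_mem _ he'⟩).2
    rcases this with h0 | h1
    · left
      rw [key ⟨e', Set.mem_insert_of_mem _ he'⟩, h0]
    · right
      rw [key ⟨e', Set.mem_insert_of_mem _ he'⟩]
      exact h1
  · rintro ⟨_, hg⟩ v e'
    rw [← hg e']
    rfl
end

section
/- Let ⟨V,E⟩ and ⟨V',E'⟩ be graphs (E a set of 2-element subsets of V, E' a set of 2-element subsets of V') and let (f,g) be a Chu transform from ⟨V,∈,E∪{∅}⟩ to ⟨V',∈,E'∪{∅}⟩. Then (f,g) is dense if and only if for every e' ∈ E', f⁻¹[e'] ∈ E. -/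
/-- For a Chu transform `(f, g)` between graphs `⟨V,E⟩` and `⟨V',E'⟩` (coded as Chu spaces
`⟨V,∈,E∪{∅}⟩` and `⟨V',∈,E'∪{∅}⟩`), density of the Chu transform is equivalent to the
requirement that `f⁻¹[e'] ∈ E` for every edge `e' ∈ E'`. -/
theorem chu_transform_graph_dense_iff {V V' : Type*} (E : Set (Set V)) (E' : Set (Set V'))
    (hE : ∀ e ∈ E, e.ncard = 2) (hE' : ∀ e ∈ E', e.ncard = 2)
    (f : V → V')
    (g : {e' : Set V' // e' ∈ insert ∅ E'} → {e : Set V // e ∈ insert ∅ E})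
    (adj : ∀ (v : V) (e' : {e' : Set V' // e' ∈ insert ∅ E'}),
      v ∈ (g e' : Set V) ↔ f v ∈ (e' : Set V')) :
    (∀ e' : {e' : Set V' // e' ∈ insert ∅ E'},
        (∃ y : V', y ∈ (e' : Set V')) → ∃ x : V, f x ∈ (e' : Set V')) ↔
      ∀ e' ∈ E', f ⁻¹' e' ∈ E := by
  constructor
  · intro hd e' he'
    have hmem : e' ∈ insert ∅ E' := Set.mem_insert_of_mem _ he'
    have hpre : f ⁻¹' e' = (g ⟨e', hmem⟩ : Set V) := by
      ext v; exact (adj v ⟨e', hmem⟩).symm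
    have hne : ∃ y : V', y ∈ e' := by
      have this := hE' e' he'
      rcases Set.nonempty_of_ncard_ne_zero (by rw [this]; exact two_ne_zero) with ⟨y, hy⟩
      exact ⟨y, hy⟩
    obtain ⟨x, hx⟩ := hd ⟨e', hmem⟩ hne
    rcases (g ⟨e', hmem⟩).2 with h0 | hgE
    · exfalso
      have : x ∈ (g ⟨e', hmem⟩ : Set V) := (adj x ⟨e', hmem⟩).mpr hx
      rw [h0] at this
      exact this
    · rw [hpre]; exact hgE
  · intro h e' hne
    rcases e'.2 with h0 | he'
    · exfalso; rcases hne with ⟨y, hy⟩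
      rw [h0] at hy; exact hy
    · have := hE _ (h e' he')
      rcases Set.nonempty_of_ncard_ne_zero (by rw [this]; exact two_ne_zero) with ⟨x, hx⟩
      exact ⟨x, hx⟩
end

section
/- Let κ ≤ λ be infinite cardinals and let (f,g) be a surjective Chu transform from ⟨X,r,A⟩ to ⟨Y,s,B⟩. If ⟨X,r,A⟩ is ⟨κ,λ⟩-compact, then ⟨Y,s,B⟩ is ⟨κ,λ⟩-compact. -/
universe u

open Cardinal

/-- A Chu space `⟨X,r,A⟩` is `⟨κ,λ⟩`-compact if for every `λ`-indexed family of states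
`(a_α)_{α<λ}`, either some point is `r`-unrelated to all `a_α`, or there is a set `Z` of
indices of cardinality `< κ` such that every point is `r`-related to `a_α` for some
`α ∈ Z`. -/
def ChuCompact {X A : Type u} (r : X → A → Prop) (κ l : Cardinal.{u}) : Prop :=
  ∀ a : l.out → A,
    (∃ x : X, ∀ α : l.out, ¬ r x (a α)) ∨
      ∃ Z : Set l.out, #Z < κ ∧ ∀ x : X, ∃ α ∈ Z, r x (a α)

/-- Surjective Chu transforms preserve `⟨κ,λ⟩`-compactness of Chu spaces. -/
theorem chuCompact_of_surjective_chu_transform {X A Y B : Type u}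
    (r : X → A → Prop) (s : Y → B → Prop) (κ l : Cardinal.{u})
    (hκ : ℵ₀ ≤ κ) (hκl : κ ≤ l)
    (f : X → Y) (g : B → A) (hf : Function.Surjective f)
    (adj : ∀ (x : X) (b : B), r x (g b) ↔ s (f x) b) :
    ChuCompact r κ l → ChuCompact s κ l := by
  intro hc b
  rcases hc (fun α => g (b α)) with ⟨x, hx⟩ | ⟨Z, hZ, hZ2⟩
  · exact Or.inl ⟨f x, fun α h => hx α ((adj x (b α)).mpr h)⟩
  · refine Or.inr ⟨Z, hZ, fun y => ?_⟩
    obtain ⟨x, rfl⟩ := hf y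
    obtain ⟨α, hα, hr⟩ := hZ2 x
    exact ⟨α, hα, (adj x (b α)).mp hr⟩
end

section
/- Let κ ≤ λ be infinite cardinals and let (f,g) be a dense Chu transform from ⟨X,r,A⟩ to ⟨Y,s,B⟩. If ⟨X,r,A⟩ is ⟨κ,λ⟩-absolutely closed, then ⟨Y,s,B⟩ is ⟨κ,λ⟩-absolutely closed. -/
universe u

open Cardinal

/-- A Chu space `⟨X,r,A⟩` is `⟨κ,λ⟩`-absolutely closed if for every `λ`-indexed family of
states `(a_α)_{α<λ}`, either some point is `r`-unrelated to all `a_α`, or there is a set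
`Z` of indices of cardinality `< κ` such that every consistent state `c` (one related to
some point) is related to a point which is also related to `a_α` for some `α ∈ Z`. -/
def ChuAbsolutelyClosed {X A : Type u} (r : X → A → Prop) (κ l : Cardinal.{u}) : Prop :=
  ∀ a : l.out → A,
    (∃ x : X, ∀ α : l.out, ¬ r x (a α)) ∨
      ∃ Z : Set l.out, #Z < κ ∧
        ∀ c : A, (∃ y : X, r y c) → ∃ x : X, r x c ∧ ∃ α ∈ Z, r x (a α)

/-- Dense Chu transforms preserve `⟨κ,λ⟩`-absolute closure of Chu spaces. -/
theorem chuAbsolutelyClosed_of_dense_chu_transform {X A Y B : Type u}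
    (r : X → A → Prop) (s : Y → B → Prop) (κ l : Cardinal.{u})
    (hκ : ℵ₀ ≤ κ) (hκl : κ ≤ l)
    (f : X → Y) (g : B → A)
    (hdense : ∀ b : B, (∃ y : Y, s y b) → ∃ x : X, s (f x) b)
    (adj : ∀ (x : X) (b : B), r x (g b) ↔ s (f x) b) :
    ChuAbsolutelyClosed r κ l → ChuAbsolutelyClosed s κ l := by
  intro h b
  rcases h (fun α => g (b α)) with ⟨x, hx⟩ | ⟨Z, hZ, hprop⟩
  · exact Or.inl ⟨f x, fun α hs => hx α ((adj x (b α)).mpr hs)⟩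
  · refine Or.inr ⟨Z, hZ, fun c hc => ?_⟩
    obtain ⟨x, hx⟩ := hdense c hc
    obtain ⟨x', hx', α, hα, hr⟩ := hprop (g c) ⟨x, (adj x c).mpr hx⟩
    exact ⟨f x', (adj x' c).mp hx', α, hα, (adj x' (b α)).mp hr⟩
end

section
/- Let κ ≤ λ be infinite cardinals. If a Chu space ⟨X,r,A⟩ is ⟨κ,λ⟩-absolutely closed, admits complements, and admits <κ-intersections, then it is ⟨κ,λ⟩-compact. -/
universe u

open Cardinal

/-- A `⟨κ,λ⟩`-absolutely closed Chu space which admits complements and admits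
`<κ`-intersections is `⟨κ,λ⟩`-compact. -/
theorem chuCompact_of_chuAbsolutelyClosed {X A : Type u}
    (r : X → A → Prop) (κ l : Cardinal.{u}) (hκ : ℵ₀ ≤ κ) (hκl : κ ≤ l)
    (hcompl : ∀ a : A, ∃ b : A, ∀ x : X, r x a ↔ ¬ r x b)
    (hinter : ∀ B : Set A, #B < κ → ∃ c : A, ∀ x : X, r x c ↔ ∀ b ∈ B, r x b) :
    ChuAbsolutelyClosed r κ l → ChuCompact r κ l := by
  intro hac a
  rcases hac a with h | ⟨Z, hZ, hZprop⟩
  · exact Or.inl h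
  refine Or.inr ⟨Z, hZ, ?_⟩
  intro x
  by_contra hx
  push_neg at hx
  choose b hb using hcompl
  obtain ⟨c, hc⟩ := hinter ((fun α => b (a α)) '' Z)
    (lt_of_le_of_lt Cardinal.mk_image_le hZ)
  have hxc : r x c := by
    rw [hc]
    rintro _ ⟨α, hα, rfl⟩
    by_contra h'
    exact hx α hα ((hb (a α) x).mpr h')
  obtain ⟨x', hx'c, α, hαZ, hx'a⟩ := hZprop c ⟨x, hxc⟩
  exact (hb (a α) x').mp hx'a ((hc x').mp hx'c _ ⟨α, hαZ, rfl⟩)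
end

section
/- Let κ ≤ λ be infinite cardinals and ⟨X,τ(X)⟩ a topological space. Then the Chu space ⟨X,∈,τ(X)⟩ is ⟨κ,λ⟩-absolutely closed if and only if every open cover of X of cardinality ≤ λ has a subfamily of cardinality < κ whose union is dense in X. -/
universe u

open Cardinal

/-- For a topological space `X`, the Chu space `⟨X,∈,τ(X)⟩` is `⟨κ,λ⟩`-absolutely closed
iff every open cover of `X` of cardinality `≤ λ` has a subfamily of cardinality `< κ`
whose union is dense in `X`. -/
theorem chuAbsolutelyClosed_topology_iff {X : Type u} [TopologicalSpace X]
    (κ l : Cardinal.{u}) (hκ : ℵ₀ ≤ κ) (hκl : κ ≤ l) :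
    ChuAbsolutelyClosed (fun (x : X) (a : {s : Set X // IsOpen s}) => x ∈ (a : Set X)) κ l ↔
      ∀ 𝒰 : Set (Set X), (∀ u ∈ 𝒰, IsOpen u) → #𝒰 ≤ l → ⋃₀ 𝒰 = Set.univ →
        ∃ 𝒱 ⊆ 𝒰, #𝒱 < κ ∧ Dense (⋃₀ 𝒱) := by
  constructor
  · intro h 𝒰 hop hcard hcov
    rcases Set.eq_empty_or_nonempty 𝒰 with rfl | hne
    · refine ⟨∅, Set.empty_subset _, ?_, ?_⟩
      · simpa using (aleph0_pos.trans_le hκ)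
      · have hXe : IsEmpty X := Set.univ_eq_empty_iff.mp (by simpa using hcov.symm)
        intro x
        exact hXe.elim x
    · have hle : #↥𝒰 ≤ #l.out := by rw [Cardinal.mk_out]; exact hcard
      obtain ⟨g⟩ := Cardinal.le_def _ _ |>.mp hle
      haveI : Nonempty ↥𝒰 := hne.to_subtype
      set f := Function.invFun g.1 with hfdef
      have hf : Function.Surjective f := Function.invFun_surjective g.2
      set a : l.out → {s : Set X // IsOpen s} :=
        fun α => ⟨((f α : ↥𝒰) : Set X), hop _ (f α).2⟩ with hadef
      rcases h a with ⟨x, hx⟩ | ⟨Z, hZ, hZ'⟩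
      · exfalso
        have hxmem : x ∈ ⋃₀ 𝒰 := hcov ▸ Set.mem_univ x
        obtain ⟨u, hu, hxu⟩ := hxmem
        obtain ⟨α, hα⟩ := hf ⟨u, hu⟩
        exact hx α (by simp only [hadef, hα]; exact hxu)
      · refine ⟨(fun α => ((f α : ↥𝒰) : Set X)) '' Z, ?_, ?_, ?_⟩
        · rintro _ ⟨α, -, rfl⟩; exact (f α).2
        · exact lt_of_le_of_lt Cardinal.mk_image_le hZ
        · rw [dense_iff_inter_open]
          rintro U hU ⟨y, hy⟩
          obtain ⟨x, hxU, α, hαZ, hxa⟩ := hZ' ⟨U, hU⟩ ⟨y, hy⟩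
          exact ⟨x, hxU, Set.mem_sUnion.mpr ⟨_, ⟨α, hαZ, rfl⟩, hxa⟩⟩
  · intro h a
    by_cases hcov : ∀ x : X, ∃ α, x ∈ (a α : Set X)
    · right
      set 𝒰 : Set (Set X) := Set.range (fun α => (a α : Set X)) with h𝒰def
      have h𝒰 := h 𝒰 (by rintro _ ⟨α, rfl⟩; exact (a α).2)
        (le_trans Cardinal.mk_range_le (by rw [Cardinal.mk_out]))
        (by
          ext x
          simp only [Set.mem_sUnion, Set.mem_univ, iff_true, h𝒰def, Set.mem_range]
          obtain ⟨α, hα⟩ := hcov x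
          exact ⟨(a α : Set X), ⟨α, rfl⟩, hα⟩)
      obtain ⟨𝒱, h𝒱𝒰, h𝒱κ, hdense⟩ := h𝒰
      choose φ hφ using fun v : ↥𝒱 => h𝒱𝒰 v.2
      refine ⟨Set.range φ, lt_of_le_of_lt Cardinal.mk_range_le h𝒱κ, ?_⟩
      rintro c ⟨y, hy⟩
      obtain ⟨x, hxc, hxV⟩ := hdense.inter_open_nonempty (c : Set X) c.2 ⟨y, hy⟩
      obtain ⟨v, hv𝒱, hxv⟩ := hxV
      refine ⟨x, hxc, φ ⟨v, hv𝒱⟩, ⟨⟨v, hv𝒱⟩, rfl⟩, ?_⟩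
      have hφ' : ((a (φ ⟨v, hv𝒱⟩) : { s : Set X // IsOpen s }) : Set X) = v := hφ ⟨v, hv𝒱⟩
      show x ∈ ((a (φ ⟨v, hv𝒱⟩) : { s : Set X // IsOpen s }) : Set X)
      rw [hφ']
      exact hxv
    · left
      push_neg at hcov
      exact hcov
end
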